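/- Let {𝒫_k}_{k=1}^N be POVMs on ℂ^d, each with d outcomes, and let F ∈ ℝ be such that ∑_{k=1}^N H(𝒫_k|σ) ≥ F for every density operator σ on ℂ^d, where H(𝒫|σ) is the Shannon entropy of the distribution (tr(P(i)σ))_i. For a density operator ρ on (ℂ^d)^{⊗n}, define C_N(ρ) = (1/(nN)) ∑_{k=1}^N ∑_{l=1}^n I_k^(l)(ρ), where I_k^(l)(ρ) is the mutual information between subsystem l and the remaining subsystems for the joint outcome distribution p(i_1,…,i_n) = tr((P_k(i_1)⊗⋯⊗P_k(i_n))ρ) obtained by measuring 𝒫_k on every subsystem. Then: (a) every fully separable density operator ρ on (ℂ^d)^{⊗n} satisfies C_N(ρ) ≤ log₂ d − F/N, and (b) every biseparable density operator ρ on (ℂ^d)^{⊗3} satisfies C_N(ρ) ≤ log₂ d − F/(3N). -/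

import Mathlib

open scoped BigOperators ComplexOrder

namespace Paper

noncomputable section

/-- Base-2 Shannon entropy of a finitely indexed probability vector. -/
def shannon {α : Type*} [Fintype α] (p : α → ℝ) : ℝ :=
  ∑ a, -(p a * Real.logb 2 (p a))

/-- Joint outcome type for `n` subsystems of local dimension `d`. -/
abbrev Idx (n d : ℕ) := Fin n → Fin d

/-- The projector `|ψ⟩⟨ψ|`. -/
def proj {α : Type*} (ψ : α → ℂ) : Matrix α α ℂ :=
  Matrix.of fun x y => ψ x * (starRingEnd ℂ) (ψ y)

/-- A density operator: positive semidefinite with trace one. -/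
def IsDensityOp {α : Type*} [Fintype α] [DecidableEq α] (ρ : Matrix α α ℂ) : Prop :=
  ρ.PosSemidef ∧ ρ.trace = 1

/-- `B` is an orthonormal basis of `ℂ^d` (`B i` is the `i`-th basis vector). -/
def IsONB {d : ℕ} (B : Fin d → Fin d → ℂ) : Prop :=
  ∀ i j, (∑ x, (starRingEnd ℂ) (B i x) * B j x) = if i = j then 1 else 0

/-- Two bases of `ℂ^d` are mutually unbiased. -/
def MutUnbiased {d : ℕ} (B B' : Fin d → Fin d → ℂ) : Prop :=
  ∀ i j, ‖∑ x, (starRingEnd ℂ) (B i x) * B' j x‖ ^ 2 = 1 / d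

/-- Joint outcome distribution of measuring the orthonormal basis `B l` on each factor `l`. -/
def jointProb {n d : ℕ} (ρ : Matrix (Idx n d) (Idx n d) ℂ)
    (B : Fin n → Fin d → Fin d → ℂ) (i : Idx n d) : ℝ :=
  (∑ x : Idx n d, ∑ y : Idx n d,
    (∏ l, (starRingEnd ℂ) (B l (i l) (x l))) * ρ x y * (∏ l, B l (i l) (y l))).re

/-- Marginal distribution of subsystem `l`. -/
def margAt {n d : ℕ} (p : Idx n d → ℝ) (l : Fin n) (i : Fin d) : ℝ :=
  ∑ x : Idx n d, if x l = i then p x else 0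

/-- Insert outcome `i` at position `l` into a tuple of outcomes of the other subsystems. -/
def insertAt {n d : ℕ} (l : Fin n) (i : Fin d) (g : {m : Fin n // m ≠ l} → Fin d) : Idx n d :=
  fun m => if h : m = l then i else g ⟨m, h⟩

/-- Marginal distribution of all subsystems except `l`. -/
def margRest {n d : ℕ} (p : Idx n d → ℝ) (l : Fin n)
    (g : {m : Fin n // m ≠ l} → Fin d) : ℝ :=
  ∑ i : Fin d, p (insertAt l i g)

/-- Mutual information `I(B⁽ˡ⁾ : B⁽ˡ̄⁾)` between the outcome at subsystem `l` and the
outcomes at the remaining subsystems, for the joint outcome distribution `p`. -/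
def mutualInfo {n d : ℕ} (p : Idx n d → ℝ) (l : Fin n) : ℝ :=
  shannon (margAt p l) + shannon (margRest p l) - shannon p

/-- The correlation function `C_N(ρ, {B_k^{(l)}})`. -/
def CNval {n d : ℕ} (N : ℕ) (ρ : Matrix (Idx n d) (Idx n d) ℂ)
    (B : Fin N → Fin n → Fin d → Fin d → ℂ) : ℝ :=
  (1 / (n * N)) * ∑ k, ∑ l, mutualInfo (jointProb ρ (B k)) l

/-- `B k l` is, for each subsystem `l`, a family of `N` pairwise mutually unbiased
orthonormal bases (indexed by `k`). -/
def ValidMUBs {n d : ℕ} (N : ℕ) (B : Fin N → Fin n → Fin d → Fin d → ℂ) : Prop :=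
  (∀ k l, IsONB (B k l)) ∧ ∀ l k k', k ≠ k' → MutUnbiased (B k l) (B k' l)

/-- The set of values `C_N(ρ, ·)` over all admissible choices of MUBs;
`𝒞_N(ρ)` is the supremum of this set. -/
def CNvalues {n d : ℕ} (N : ℕ) (ρ : Matrix (Idx n d) (Idx n d) ℂ) : Set ℝ :=
  {x | ∃ B : Fin N → Fin n → Fin d → Fin d → ℂ, ValidMUBs N B ∧ x = CNval N ρ B}

/-- Single-subsystem reduced state `tr_{l̄} ρ`. -/
def reducedAt {n d : ℕ} (ρ : Matrix (Idx n d) (Idx n d) ℂ) (l : Fin n) :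
    Matrix (Fin d) (Fin d) ℂ :=
  Matrix.of fun i j =>
    ∑ g : {m : Fin n // m ≠ l} → Fin d, ρ (insertAt l i g) (insertAt l j g)

/-- `ω_d = exp(2πi/d)`. -/
def ω (d : ℕ) : ℂ := Complex.exp (2 * Real.pi * Complex.I / d)

/-- The generalized Pauli operator `X_d`. -/
def Xmat (d : ℕ) : Matrix (Fin d) (Fin d) ℂ :=
  Matrix.of fun i j => if (i : ℕ) = ((j : ℕ) + 1) % d then 1 else 0

/-- The generalized Pauli operator `Z_d`. -/
def Zmat (d : ℕ) : Matrix (Fin d) (Fin d) ℂ :=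
  Matrix.of fun i j => if i = j then ω d ^ (i : ℕ) else 0

/-- The generalized Pauli operator `S_{d,(k₁,k₂)} = X_d^{k₁} Z_d^{k₂}`. -/
def Smat (d : ℕ) (k : Fin d × Fin d) : Matrix (Fin d) (Fin d) ℂ :=
  Xmat d ^ (k.1 : ℕ) * Zmat d ^ (k.2 : ℕ)

/-- Apply a local operator `A l` to each tensor factor of a multipartite vector `ψ`,
i.e. the vector `(⊗_l A l) ψ`. -/
def applyLocal {n d : ℕ} (A : Fin n → Matrix (Fin d) (Fin d) ℂ) (ψ : Idx n d → ℂ) :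
    Idx n d → ℂ :=
  fun x => ∑ y : Idx n d, (∏ l, A l (x l) (y l)) * ψ y

/-- The computational (standard) basis of `ℂ^d`, the eigenbasis of `Z_d`. -/
def stdBasis (d : ℕ) : Fin d → Fin d → ℂ :=
  fun i x => if x = i then 1 else 0

/-- The Fourier basis of `ℂ^d`, the eigenbasis of `X_d`. -/
def fourierBasis (d : ℕ) : Fin d → Fin d → ℂ :=
  fun i x => (((Real.sqrt d)⁻¹ : ℝ) : ℂ) * ω d ^ ((i : ℕ) * (x : ℕ))

/-- The `n`-fold tensor product `⊗_l A l` as a matrix on the joint system. -/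
def tensorN {n d : ℕ} (A : Fin n → Matrix (Fin d) (Fin d) ℂ) :
    Matrix (Idx n d) (Idx n d) ℂ :=
  Matrix.of fun x y => ∏ l, A l (x l) (y l)

/-- Full separability of an `n`-partite density operator. -/
def FullySep {n d : ℕ} (ρ : Matrix (Idx n d) (Idx n d) ℂ) : Prop :=
  ∃ (J : ℕ) (p : Fin J → ℝ) (σ : Fin J → Fin n → Matrix (Fin d) (Fin d) ℂ),
    (∀ j, 0 ≤ p j) ∧ (∑ j, p j) = 1 ∧ (∀ j l, IsDensityOp (σ j l)) ∧
    ρ = ∑ j, p j • tensorN (σ j)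

/-- generalized GHZ state `(1/√d) ∑_i |i⟩^{⊗n}`. -/
def GHZvec (d n : ℕ) : Idx n d → ℂ :=
  fun x => if ∀ l l', x l = x l' then (((Real.sqrt d)⁻¹ : ℝ) : ℂ) else 0


/-- Restriction of a joint outcome to the subsystems other than `l`. -/
def restrictAt {n d : ℕ} (l : Fin n) (x : Idx n d) : {m : Fin n // m ≠ l} → Fin d :=
  fun m => x m.1

/-- The operator `A ⊗ T` placed so that `A` acts on subsystem `l` of three subsystems and
`T` on the remaining two. -/
def assembleAt {d : ℕ} (l : Fin 3) (A : Matrix (Fin d) (Fin d) ℂ)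
    (T : Matrix ({m : Fin 3 // m ≠ l} → Fin d) ({m : Fin 3 // m ≠ l} → Fin d) ℂ) :
    Matrix (Idx 3 d) (Idx 3 d) ℂ :=
  Matrix.of fun x y => A (x l) (y l) * T (restrictAt l x) (restrictAt l y)

/-- Biseparability of a tripartite density operator. -/
def Bisep3 {d : ℕ} (ρ : Matrix (Idx 3 d) (Idx 3 d) ℂ) : Prop :=
  ∃ (J : ℕ) (p : Fin J → Fin 3 → ℝ)
    (σ : Fin J → Fin 3 → Matrix (Fin d) (Fin d) ℂ)
    (τ : (j : Fin J) → (l : Fin 3) →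
      Matrix ({m : Fin 3 // m ≠ l} → Fin d) ({m : Fin 3 // m ≠ l} → Fin d) ℂ),
    (∀ j l, 0 ≤ p j l) ∧ (∑ j, ∑ l, p j l) = 1 ∧
    (∀ j l, IsDensityOp (σ j l)) ∧ (∀ j l, IsDensityOp (τ j l)) ∧
    ρ = ∑ j, ∑ l, p j l • assembleAt l (σ j l) (τ j l)

/-- Joint outcome distribution of measuring the `d`-outcome POVM `P` on every subsystem. -/
def povmJointProb {n d : ℕ} (ρ : Matrix (Idx n d) (Idx n d) ℂ)
    (P : Fin d → Matrix (Fin d) (Fin d) ℂ) (i : Idx n d) : ℝ :=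
  (Matrix.trace (tensorN (fun l => P (i l)) * ρ)).re

/-- The correlation function `C_N` for measurements in the POVMs `P k`. -/
def povmCN {n d : ℕ} (N : ℕ) (ρ : Matrix (Idx n d) (Idx n d) ℂ)
    (P : Fin N → Fin d → Matrix (Fin d) (Fin d) ℂ) : ℝ :=
  (1 / (n * N)) * ∑ k, ∑ l, mutualInfo (povmJointProb ρ (P k)) l

/-!
Measure `P` on every subsystem and split the outcome into `A`, the outcome at subsystem `l`,
and `B`, the outcomes at the others. Then `I(A:B) = H(A) - H(A|B) ≤ log₂ d - H(A|B)`. The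
conditional entropy `H(A|B)` is nonnegative and concave in the outcome distribution, which is
linear in the state, and for a product state `σ ⊗ τ` across `l` it equals `H(P|σ)`. So for a
mixture `I_l ≤ log₂ d - ∑ w_c H(P|σ_c)`, the sum running over the components that are products
across `l`. Summing over the `N` POVMs and using the uncertainty bound gives
`∑_k I_{k,l} ≤ N log₂ d - F w_l`, with `w_l` the weight of those components: `w_l = 1` for
every `l` in the fully separable case, while in the biseparable case the weights of the three
cuts add up to `1`.
-/

open Real

section Entropy

variable {α γ : Type*} [Fintype α] [Fintype γ]

theorem sum_mul_logb_div_le_sum {b : ℝ} (hb : 1 < b) (x y : γ → ℝ) (hx : ∀ c, 0 ≤ x c)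
    (hy : ∀ c, 0 ≤ y c) (hxy : ∀ c, y c = 0 → x c = 0) :
    (∑ c, x c) * logb b ((∑ c, x c) / ∑ c, y c) ≤ ∑ c, x c * logb b (x c / y c) := by
  set X := ∑ c, x c
  set Y := ∑ c, y c
  suffices X * log (X / Y) ≤ ∑ c, x c * log (x c / y c) by
    simp only [logb, ← mul_div_assoc, ← Finset.sum_div]
    exact div_le_div_of_nonneg_right this (log_pos hb).le
  rcases (Finset.sum_nonneg fun c _ => hy c).eq_or_lt with hY | hY
  · have hy0 c : y c = 0 := (Finset.sum_eq_zero_iff_of_nonneg fun c _ => hy c).mp hY.symm c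
      (Finset.mem_univ c)
    simp [X, hxy _ (hy0 _)]
  have hY0 : Y ≠ 0 := hY.ne'
  -- Jensen for `t ↦ t log t` with weights `y c / Y` at the points `x c / y c`
  have cancel c (t : ℝ) : y c / Y * (x c / y c * t) = x c / Y * t := by
    rcases (hy c).eq_or_lt with h | h
    · simp [← h, hxy c h.symm]
    · field_simp
  have jensen := convexOn_mul_log.map_sum_le (t := Finset.univ) (w := fun c => y c / Y)
    (p := fun c => x c / y c) (fun c _ => div_nonneg (hy c) hY.le)
    (by rw [← Finset.sum_div, div_self hY0]) fun c _ => div_nonneg (hx c) (hy c)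
  have hmean : ∑ c, y c / Y * (x c / y c) = X / Y := by
    simpa [← Finset.sum_div] using Finset.sum_congr rfl fun c _ => cancel c 1
  have hvalue : ∑ c, y c / Y * (x c / y c * log (x c / y c)) =
      (∑ c, x c * log (x c / y c)) / Y := by
    rw [Finset.sum_div]
    exact Finset.sum_congr rfl fun c _ => by rw [cancel, div_mul_eq_mul_div]
  simp only [smul_eq_mul, hmean, hvalue] at jensen
  calc X * log (X / Y) = X / Y * log (X / Y) * Y := by field_simp
    _ ≤ (∑ c, x c * log (x c / y c)) / Y * Y := by gcongr
    _ = _ := div_mul_cancel₀ _ hY0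

theorem shannon_le_logb_card (q : α → ℝ) (hq : ∀ a, 0 ≤ q a) (hq1 : ∑ a, q a = 1) :
    shannon q ≤ logb 2 (Fintype.card α) := by
  have h := sum_mul_logb_div_le_sum one_lt_two q 1 hq (fun _ => zero_le_one) fun _ h =>
    absurd h one_ne_zero
  simp only [hq1, Pi.one_apply, div_one, Finset.sum_const, Finset.card_univ, nsmul_eq_mul,
    mul_one, one_mul, one_div, logb_inv] at h
  simp only [shannon, Finset.sum_neg_distrib]
  linarith

end Entropy

section CondEntropy

variable {α β γ : Type*} [Fintype α] [Fintype β] [Fintype γ]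

def condEntropy (μ : α → β → ℝ) : ℝ :=
  -∑ a, ∑ b, μ a b * logb 2 (μ a b / ∑ a', μ a' b)

theorem condEntropy_nonneg {μ : α → β → ℝ} (hμ : ∀ a b, 0 ≤ μ a b) : 0 ≤ condEntropy μ := by
  rw [condEntropy, neg_nonneg]
  refine Finset.sum_nonpos fun a _ => Finset.sum_nonpos fun b _ => ?_
  have hmarg : 0 ≤ ∑ a', μ a' b := Finset.sum_nonneg fun a' _ => hμ a' b
  refine mul_nonpos_of_nonneg_of_nonpos (hμ a b) (logb_nonpos one_lt_two
    (div_nonneg (hμ a b) hmarg) (div_le_one_of_le₀ ?_ hmarg))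
  exact Finset.single_le_sum (fun a' _ => hμ a' b) (Finset.mem_univ a)

theorem condEntropy_mul {r : α → ℝ} {s : β → ℝ} (hr : ∑ a, r a = 1) (hs : ∑ b, s b = 1) :
    condEntropy (fun a b => r a * s b) = shannon r := by
  have hmarg b : ∑ a, r a * s b = s b := by rw [← Finset.sum_mul, hr, one_mul]
  have hterm a b : r a * s b * logb 2 (r a * s b / s b) = s b * (r a * logb 2 (r a)) := by
    rcases eq_or_ne (s b) 0 with h | h
    · simp [h]
    · rw [mul_div_cancel_right₀ _ h]
      ring
  simp only [condEntropy, shannon, hmarg, hterm, ← Finset.sum_mul, hs, one_mul,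
    Finset.sum_neg_distrib]

/-- Concavity of the conditional entropy; pointwise in `(a, b)` this is the log-sum inequality. -/
theorem sum_mul_condEntropy_le {w : γ → ℝ} {μ : γ → α → β → ℝ} (hw : ∀ c, 0 ≤ w c)
    (hμ : ∀ c a b, 0 ≤ μ c a b) :
    ∑ c, w c * condEntropy (μ c) ≤ condEntropy (fun a b => ∑ c, w c * μ c a b) := by
  simp only [condEntropy, mul_neg, Finset.sum_neg_distrib, neg_le_neg_iff, Finset.mul_sum]
  conv_rhs => rw [Finset.sum_comm]; enter [2, a]; rw [Finset.sum_comm]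
  gcongr with a _ b _
  have hmarg : ∑ a', ∑ c, w c * μ c a' b = ∑ c, w c * ∑ a', μ c a' b := by
    simp only [Finset.mul_sum]
    exact Finset.sum_comm
  have hterm c : w c * μ c a b * logb 2 (w c * μ c a b / (w c * ∑ a', μ c a' b)) =
      w c * (μ c a b * logb 2 (μ c a b / ∑ a', μ c a' b)) := by
    rcases eq_or_ne (w c) 0 with h | h
    · simp [h]
    · rw [mul_div_mul_left _ _ h, mul_assoc]
  rw [hmarg, ← Finset.sum_congr rfl fun c _ => hterm c]
  refine sum_mul_logb_div_le_sum one_lt_two _ _ (fun c => mul_nonneg (hw c) (hμ c a b))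
    (fun c => mul_nonneg (hw c) (Finset.sum_nonneg fun a' _ => hμ c a' b)) fun c hc => ?_
  rcases mul_eq_zero.mp hc with h | h
  · simp [h]
  · simp [(Finset.sum_eq_zero_iff_of_nonneg fun a' _ => hμ c a' b).mp h a (Finset.mem_univ a)]

end CondEntropy

section MutualInfo

variable {n d : ℕ}

theorem insertAt_self (l : Fin n) (i : Fin d) (g : {m : Fin n // m ≠ l} → Fin d) :
    insertAt l i g l = i := dif_pos rfl

theorem insertAt_of_ne (l : Fin n) (i : Fin d) (g : {m : Fin n // m ≠ l} → Fin d)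
    (m : {m : Fin n // m ≠ l}) : insertAt l i g m = g m := dif_neg m.2

theorem funSplitAt_symm_eq_insertAt (l : Fin n) (i : Fin d) (g : {m : Fin n // m ≠ l} → Fin d) :
    (Equiv.funSplitAt l (Fin d)).symm (i, g) = insertAt l i g := by
  funext m
  by_cases h : m = l
  · subst h
    simp [insertAt_self]
  · simp [Equiv.funSplitAt, Equiv.piSplitAt, insertAt, h]

theorem sum_eq_sum_insertAt {M : Type*} [AddCommMonoid M] (l : Fin n) (f : Idx n d → M) :
    ∑ x, f x = ∑ i, ∑ g, f (insertAt l i g) := by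
  simp only [← (Equiv.funSplitAt l (Fin d)).symm.sum_comp, Fintype.sum_prod_type,
    funSplitAt_symm_eq_insertAt]

theorem margAt_eq_sum_insertAt (p : Idx n d → ℝ) (l : Fin n) (i : Fin d) :
    margAt p l i = ∑ g, p (insertAt l i g) := by
  simp [margAt, sum_eq_sum_insertAt l, insertAt_self]

theorem mutualInfo_eq_shannon_sub_condEntropy {p : Idx n d → ℝ} (hp : ∀ x, 0 ≤ p x) (l : Fin n) :
    mutualInfo p l = shannon (margAt p l) - condEntropy fun i g => p (insertAt l i g) := by
  have hterm i g : p (insertAt l i g) * logb 2 (p (insertAt l i g) / margRest p l g) =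
      p (insertAt l i g) * logb 2 (p (insertAt l i g)) -
        p (insertAt l i g) * logb 2 (margRest p l g) := by
    rcases (hp (insertAt l i g)).eq_or_lt with h | h
    · simp [← h]
    have hle : p (insertAt l i g) ≤ margRest p l g :=
      Finset.single_le_sum (fun i' _ => hp (insertAt l i' g)) (Finset.mem_univ i)
    rw [logb_div h.ne' (h.trans_le hle).ne', mul_sub]
  have hmarg : ∑ i, ∑ g, p (insertAt l i g) * logb 2 (margRest p l g) =
      ∑ g, margRest p l g * logb 2 (margRest p l g) := by
    rw [Finset.sum_comm]
    simp only [margRest, Finset.sum_mul]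
  have hrest g : ∑ i, p (insertAt l i g) = margRest p l g := rfl
  simp only [mutualInfo, condEntropy, shannon, Finset.sum_neg_distrib, hrest, hterm,
    Finset.sum_sub_distrib, hmarg, sum_eq_sum_insertAt l (fun x => p x * logb 2 (p x))]
  ring

theorem mutualInfo_le_logb_sub_condEntropy {p : Idx n d → ℝ} (hp : ∀ x, 0 ≤ p x)
    (hp1 : ∑ x, p x = 1) (l : Fin n) :
    mutualInfo p l ≤ logb 2 d - condEntropy fun i g => p (insertAt l i g) := by
  have hmarg := shannon_le_logb_card (margAt p l)
    (fun i => Finset.sum_nonneg fun x _ => by split_ifs <;> simp [hp x])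
    (by simp only [margAt_eq_sum_insertAt, ← sum_eq_sum_insertAt, hp1])
  rw [Fintype.card_fin] at hmarg
  rw [mutualInfo_eq_shannon_sub_condEntropy hp]
  linarith

end MutualInfo

section Tensor

open Matrix
open scoped Kronecker

variable {ι α κ R 𝕜 : Type*} [Fintype ι] [CommSemiring R] [RCLike 𝕜]

theorem exists_eq_conjTranspose_mul_self [Fintype κ] [DecidableEq κ] {A : Matrix κ κ 𝕜}
    (hA : A.PosSemidef) : ∃ B : Matrix κ κ 𝕜, A = Bᴴ * B := by
  open scoped MatrixOrder in
  exact CStarAlgebra.nonneg_iff_eq_star_mul_self.mp hA.nonneg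

def piTensor (A : ι → Matrix κ κ R) : Matrix (ι → κ) (ι → κ) R :=
  Matrix.of fun x y => ∏ m, A m (x m) (y m)

theorem tensorN_eq_piTensor {n d : ℕ} (A : Fin n → Matrix (Fin d) (Fin d) ℂ) :
    tensorN A = piTensor A := rfl

theorem piTensor_mul_piTensor [DecidableEq ι] [Fintype κ] (A B : ι → Matrix κ κ R) :
    piTensor A * piTensor B = piTensor (A * B) := by
  ext x z
  simp only [piTensor, mul_apply, of_apply, Pi.mul_apply, Fintype.prod_sum,
    Finset.prod_mul_distrib]

theorem conjTranspose_piTensor [StarRing R] (A : ι → Matrix κ κ R) :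
    (piTensor A)ᴴ = piTensor fun m => (A m)ᴴ := by
  ext x y
  simp [piTensor, star_prod]

theorem posSemidef_piTensor [DecidableEq ι] [Fintype κ] [DecidableEq κ] {A : ι → Matrix κ κ 𝕜}
    (hA : ∀ m, (A m).PosSemidef) : (piTensor A).PosSemidef := by
  choose B hB using fun m => exists_eq_conjTranspose_mul_self (hA m)
  have : piTensor A = (piTensor B)ᴴ * piTensor B := by
    rw [conjTranspose_piTensor, piTensor_mul_piTensor]
    exact congrArg piTensor (funext hB)
  exact this ▸ posSemidef_conjTranspose_mul_self _

theorem trace_piTensor [DecidableEq ι] [Fintype κ] (A : ι → Matrix κ κ R) :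
    (piTensor A).trace = ∏ m, (A m).trace := by
  simp only [trace, diag, piTensor, of_apply, Fintype.prod_sum]

theorem sum_piTensor_eq_one [DecidableEq ι] [DecidableEq κ] {o : Type*} [Fintype o]
    {P : o → Matrix κ κ R} (hP : ∑ i, P i = 1) :
    ∑ g : ι → o, piTensor (fun m => P (g m)) = 1 := by
  ext x y
  have hentry (a b : κ) : ∑ i, P i a b = (1 : Matrix κ κ R) a b := by
    rw [← hP, Matrix.sum_apply]
  simp only [Matrix.sum_apply, piTensor, of_apply]
  rw [← Fintype.prod_sum fun m i => P i (x m) (y m)]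
  simp only [hentry, one_apply, Finset.prod_boole, Finset.mem_univ, true_implies, funext_iff]

variable [DecidableEq α] [Fintype α]

def splitTensor (l : α) (A : Matrix κ κ R)
    (T : Matrix ({m // m ≠ l} → κ) ({m // m ≠ l} → κ) R) : Matrix (α → κ) (α → κ) R :=
  (A ⊗ₖ T).submatrix (Equiv.funSplitAt l κ) (Equiv.funSplitAt l κ)

theorem assembleAt_eq_splitTensor {d : ℕ} (l : Fin 3) (A : Matrix (Fin d) (Fin d) ℂ)
    (T : Matrix ({m : Fin 3 // m ≠ l} → Fin d) ({m : Fin 3 // m ≠ l} → Fin d) ℂ) :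
    assembleAt l A T = splitTensor l A T := rfl

theorem splitTensor_mul_splitTensor [Fintype κ] (l : α) (A B : Matrix κ κ R)
    (T S : Matrix ({m // m ≠ l} → κ) ({m // m ≠ l} → κ) R) :
    splitTensor l A T * splitTensor l B S = splitTensor l (A * B) (T * S) := by
  simp only [splitTensor, submatrix_mul_equiv, mul_kronecker_mul]

theorem trace_splitTensor [Fintype κ] (l : α) (A : Matrix κ κ R)
    (T : Matrix ({m // m ≠ l} → κ) ({m // m ≠ l} → κ) R) :
    (splitTensor l A T).trace = A.trace * T.trace := by
  rw [← trace_kronecker]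
  exact (Equiv.funSplitAt l κ).sum_comp fun p => (A ⊗ₖ T) p p

theorem posSemidef_splitTensor [Fintype κ] (l : α) {A : Matrix κ κ 𝕜}
    {T : Matrix ({m // m ≠ l} → κ) ({m // m ≠ l} → κ) 𝕜} (hA : A.PosSemidef)
    (hT : T.PosSemidef) : (splitTensor l A T).PosSemidef :=
  (hA.kronecker hT).submatrix _

theorem piTensor_eq_splitTensor (l : α) (A : α → Matrix κ κ R) :
    piTensor A = splitTensor l (A l) (piTensor fun m : {m // m ≠ l} => A m) := by
  ext x y
  simp [piTensor, splitTensor, Fintype.prod_eq_mul_prod_subtype_ne _ l]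

end Tensor

section Povm

open Matrix
open scoped ComplexOrder

variable {n d : ℕ}

theorem trace_mul_nonneg {κ 𝕜 : Type*} [Fintype κ] [DecidableEq κ] [RCLike 𝕜]
    {A B : Matrix κ κ 𝕜} (hA : A.PosSemidef) (hB : B.PosSemidef) : 0 ≤ (A * B).trace := by
  obtain ⟨C, rfl⟩ := exists_eq_conjTranspose_mul_self hA
  rw [Matrix.mul_assoc, trace_mul_comm]
  exact (hB.mul_mul_conjTranspose_same C).trace_nonneg

theorem sum_re_trace_mul_eq_one {κ o : Type*} [Fintype κ] [DecidableEq κ] [Fintype o]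
    {E : o → Matrix κ κ ℂ} (hE : ∑ i, E i = 1) {ρ : Matrix κ κ ℂ} (hρ : ρ.trace = 1) :
    ∑ i, (E i * ρ).trace.re = 1 := by
  rw [← Complex.re_sum, ← trace_sum, ← Finset.sum_mul, hE, Matrix.one_mul, hρ, Complex.one_re]

theorem isDensityOp_piTensor {ι κ : Type*} [Fintype ι] [DecidableEq ι] [Fintype κ]
    [DecidableEq κ] {A : ι → Matrix κ κ ℂ} (hA : ∀ m, IsDensityOp (A m)) :
    IsDensityOp (piTensor A) :=
  ⟨posSemidef_piTensor fun m => (hA m).1, by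
    rw [trace_piTensor]
    exact Finset.prod_eq_one fun m _ => (hA m).2⟩

theorem povmJointProb_nonneg {ρ : Matrix (Idx n d) (Idx n d) ℂ} (hρ : ρ.PosSemidef)
    {P : Fin d → Matrix (Fin d) (Fin d) ℂ} (hP : ∀ i, (P i).PosSemidef) (x : Idx n d) :
    0 ≤ povmJointProb ρ P x :=
  (Complex.nonneg_iff.mp (trace_mul_nonneg (posSemidef_piTensor fun l => hP (x l)) hρ)).1

theorem sum_povmJointProb {ρ : Matrix (Idx n d) (Idx n d) ℂ} (hρ : ρ.trace = 1)
    {P : Fin d → Matrix (Fin d) (Fin d) ℂ} (hP : ∑ i, P i = 1) :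
    ∑ x, povmJointProb ρ P x = 1 :=
  sum_re_trace_mul_eq_one (sum_piTensor_eq_one hP) hρ

theorem povmJointProb_sum_smul {γ : Type*} [Fintype γ] (w : γ → ℝ)
    (ρ : γ → Matrix (Idx n d) (Idx n d) ℂ) (P : Fin d → Matrix (Fin d) (Fin d) ℂ) (x : Idx n d) :
    povmJointProb (∑ c, w c • ρ c) P x = ∑ c, w c * povmJointProb (ρ c) P x := by
  simp [povmJointProb, Matrix.mul_sum, trace_sum, Complex.re_sum]

theorem povmJointProb_splitTensor (l : Fin n) {σ : Matrix (Fin d) (Fin d) ℂ}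
    {τ : Matrix ({m // m ≠ l} → Fin d) ({m // m ≠ l} → Fin d) ℂ} (hσ : σ.PosSemidef)
    (hτ : τ.PosSemidef) {P : Fin d → Matrix (Fin d) (Fin d) ℂ} (hP : ∀ i, (P i).PosSemidef)
    (x : Idx n d) :
    povmJointProb (splitTensor l σ τ) P x =
      (P (x l) * σ).trace.re * (piTensor (fun m : {m // m ≠ l} => P (x m)) * τ).trace.re := by
  have hreal₁ := Complex.nonneg_iff.mp (trace_mul_nonneg (hP (x l)) hσ)
  have hreal₂ := Complex.nonneg_iff.mp
    (trace_mul_nonneg (posSemidef_piTensor fun m : {m // m ≠ l} => hP (x m)) hτ)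
  rw [povmJointProb, tensorN_eq_piTensor, piTensor_eq_splitTensor l,
    splitTensor_mul_splitTensor, trace_splitTensor, Complex.mul_re, ← hreal₁.2, ← hreal₂.2,
    mul_zero, sub_zero]

theorem condEntropy_povmJointProb_splitTensor (l : Fin n) {σ : Matrix (Fin d) (Fin d) ℂ}
    {τ : Matrix ({m // m ≠ l} → Fin d) ({m // m ≠ l} → Fin d) ℂ} (hσ : IsDensityOp σ)
    (hτ : IsDensityOp τ) {P : Fin d → Matrix (Fin d) (Fin d) ℂ} (hP : ∀ i, (P i).PosSemidef)
    (hP1 : ∑ i, P i = 1) :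
    condEntropy (fun i g => povmJointProb (splitTensor l σ τ) P (insertAt l i g)) =
      shannon fun i => (P i * σ).trace.re := by
  simp only [povmJointProb_splitTensor l hσ.1 hτ.1 hP, insertAt_self, insertAt_of_ne]
  exact condEntropy_mul (sum_re_trace_mul_eq_one hP1 hσ.2)
    (sum_re_trace_mul_eq_one (sum_piTensor_eq_one hP1) hτ.2)

end Povm

section CorrelationBound

open Matrix

variable {n d : ℕ} {γ : Type*} [Fintype γ]

theorem mutualInfo_povmJointProb_le {ρ : Matrix (Idx n d) (Idx n d) ℂ} (hρ : IsDensityOp ρ)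
    {w : γ → ℝ} (hw : ∀ c, 0 ≤ w c) {ρs : γ → Matrix (Idx n d) (Idx n d) ℂ}
    (hρs : ∀ c, (ρs c).PosSemidef) (hmix : ρ = ∑ c, w c • ρs c)
    {P : Fin d → Matrix (Fin d) (Fin d) ℂ} (hP : ∀ i, (P i).PosSemidef) (hP1 : ∑ i, P i = 1)
    (l : Fin n) {S : Finset γ} {σ : γ → Matrix (Fin d) (Fin d) ℂ}
    (hsplit : ∀ c ∈ S, IsDensityOp (σ c) ∧ ∃ τ, IsDensityOp τ ∧ ρs c = splitTensor l (σ c) τ) :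
    mutualInfo (povmJointProb ρ P) l ≤
      logb 2 d - ∑ c ∈ S, w c * shannon fun i => (P i * σ c).trace.re := by
  set μ : γ → Fin d → ({m // m ≠ l} → Fin d) → ℝ :=
    fun c i g => povmJointProb (ρs c) P (insertAt l i g)
  have hμ c i g : 0 ≤ μ c i g := povmJointProb_nonneg (hρs c) hP _
  have hcomponent : ∀ c ∈ S, w c * (shannon fun i => (P i * σ c).trace.re) =
      w c * condEntropy (μ c) := by
    intro c hc
    obtain ⟨hσ, τ, hτ, hsplit⟩ := hsplit c hc
    simp only [μ, hsplit, condEntropy_povmJointProb_splitTensor l hσ hτ hP hP1]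
  calc mutualInfo (povmJointProb ρ P) l
      ≤ logb 2 d - condEntropy fun i g => povmJointProb ρ P (insertAt l i g) :=
        mutualInfo_le_logb_sub_condEntropy (povmJointProb_nonneg hρ.1 hP)
          (sum_povmJointProb hρ.2 hP1) l
    _ ≤ logb 2 d - ∑ c, w c * condEntropy (μ c) := by
        simp only [hmix, povmJointProb_sum_smul]
        gcongr
        exact sum_mul_condEntropy_le hw hμ
    _ ≤ logb 2 d - ∑ c ∈ S, w c * shannon fun i => (P i * σ c).trace.re := by
        rw [Finset.sum_congr rfl hcomponent]
        gcongr
        · exact fun c _ _ => mul_nonneg (hw c) (condEntropy_nonneg (hμ c))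
        · exact Finset.subset_univ S

theorem sum_mutualInfo_povmJointProb_le {N : ℕ} {P : Fin N → Fin d → Matrix (Fin d) (Fin d) ℂ}
    (hP : ∀ k, (∀ i, (P k i).PosSemidef) ∧ ∑ i, P k i = 1) {F : ℝ}
    (hF : ∀ σ : Matrix (Fin d) (Fin d) ℂ, IsDensityOp σ →
      F ≤ ∑ k, shannon fun i => (P k i * σ).trace.re)
    {ρ : Matrix (Idx n d) (Idx n d) ℂ} (hρ : IsDensityOp ρ)
    {w : γ → ℝ} (hw : ∀ c, 0 ≤ w c) {ρs : γ → Matrix (Idx n d) (Idx n d) ℂ}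
    (hρs : ∀ c, (ρs c).PosSemidef) (hmix : ρ = ∑ c, w c • ρs c)
    (l : Fin n) {S : Finset γ} {σ : γ → Matrix (Fin d) (Fin d) ℂ}
    (hsplit : ∀ c ∈ S, IsDensityOp (σ c) ∧ ∃ τ, IsDensityOp τ ∧ ρs c = splitTensor l (σ c) τ) :
    ∑ k, mutualInfo (povmJointProb ρ (P k)) l ≤ N * logb 2 d - F * ∑ c ∈ S, w c := by
  calc ∑ k, mutualInfo (povmJointProb ρ (P k)) l
      ≤ ∑ k, (logb 2 d - ∑ c ∈ S, w c * shannon fun i => (P k i * σ c).trace.re) :=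
        Finset.sum_le_sum fun k _ =>
          mutualInfo_povmJointProb_le hρ hw hρs hmix (hP k).1 (hP k).2 l hsplit
    _ = N * logb 2 d - ∑ c ∈ S, w c * ∑ k, shannon fun i => (P k i * σ c).trace.re := by
        simp only [Finset.sum_sub_distrib, Finset.sum_const, Finset.card_univ, Fintype.card_fin,
          nsmul_eq_mul, Finset.mul_sum]
        rw [Finset.sum_comm]
    _ ≤ N * logb 2 d - F * ∑ c ∈ S, w c := by
        rw [Finset.mul_sum]
        refine sub_le_sub_left (Finset.sum_le_sum fun c hc => ?_) _
        rw [mul_comm]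
        exact mul_le_mul_of_nonneg_left (hF _ (hsplit c hc).1) (hw c)

theorem povmCN_le_of_sum_mutualInfo_le {N : ℕ} {ρ : Matrix (Idx n d) (Idx n d) ℂ}
    {P : Fin N → Fin d → Matrix (Fin d) (Fin d) ℂ} {F : ℝ} (hn : 0 < n) (w : Fin n → ℝ)
    (h : ∀ l, ∑ k, mutualInfo (povmJointProb ρ (P k)) l ≤ N * logb 2 d - F * w l) :
    povmCN N ρ P ≤ logb 2 d - F * (∑ l, w l) / (n * N) := by
  rcases N.eq_zero_or_pos with rfl | hN
  · have hlog : 0 ≤ logb 2 d := div_nonneg (log_natCast_nonneg d) (log_nonneg one_le_two)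
    simpa [povmCN] using hlog
  have hnN : (0 : ℝ) < n * N := by positivity
  rw [povmCN, Finset.sum_comm, one_div, inv_mul_le_iff₀ hnN]
  calc ∑ l, ∑ k, mutualInfo (povmJointProb ρ (P k)) l
      ≤ ∑ l, (N * logb 2 d - F * w l) := Finset.sum_le_sum fun l _ => h l
    _ = n * N * (logb 2 d - F * (∑ l, w l) / (n * N)) := by
        simp only [Finset.sum_sub_distrib, Finset.sum_const, Finset.card_univ, Fintype.card_fin,
          nsmul_eq_mul, ← Finset.mul_sum]
        field_simp

end CorrelationBound

theorem povm_correlation_bounds_general (d N : ℕ)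
    (P : Fin N → Fin d → Matrix (Fin d) (Fin d) ℂ)
    (hP : ∀ k, (∀ i, (P k i).PosSemidef) ∧ (∑ i, P k i) = 1)
    (F : ℝ)
    (hF : ∀ σ : Matrix (Fin d) (Fin d) ℂ, IsDensityOp σ →
      F ≤ ∑ k, shannon (fun i => (Matrix.trace (P k i * σ)).re)) :
    (∀ n : ℕ, 0 < n → ∀ ρ : Matrix (Idx n d) (Idx n d) ℂ, IsDensityOp ρ → FullySep ρ →
      povmCN N ρ P ≤ Real.logb 2 d - F / N) ∧
    (∀ ρ : Matrix (Idx 3 d) (Idx 3 d) ℂ, IsDensityOp ρ → Bisep3 ρ →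
      povmCN N ρ P ≤ Real.logb 2 d - F / (3 * N)) := by
  constructor
  · rintro n hn ρ hρ ⟨J, p, σ, hp, hp1, hσ, hmix⟩
    have hsite l : ∑ k, mutualInfo (povmJointProb ρ (P k)) l ≤ N * logb 2 d - F * 1 := by
      rw [← hp1]
      refine sum_mutualInfo_povmJointProb_le hP hF hρ hp
        (fun j => posSemidef_piTensor fun m => (hσ j m).1) hmix l fun j _ =>
          ⟨hσ j l, _, isDensityOp_piTensor fun m => hσ j m, piTensor_eq_splitTensor l _⟩
    have hbound := povmCN_le_of_sum_mutualInfo_le hn _ hsite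
    rwa [Finset.sum_const, Finset.card_univ, Fintype.card_fin, nsmul_one, mul_comm F,
      mul_div_mul_left _ _ (by positivity)] at hbound
  · rintro ρ hρ ⟨J, p, σ, τ, hp, hp1, hσ, hτ, hmix⟩
    rw [← Fintype.sum_prod_type'] at hmix hp1
    have hsite m : ∑ k, mutualInfo (povmJointProb ρ (P k)) m ≤
        N * logb 2 d - F * ∑ c : Fin J × Fin 3 with c.2 = m, p c.1 c.2 := by
      refine sum_mutualInfo_povmJointProb_le hP hF hρ (fun c : Fin J × Fin 3 => hp c.1 c.2)
        (ρs := fun c => assembleAt c.2 (σ c.1 c.2) (τ c.1 c.2)) (fun c => ?_) hmix m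
        (σ := fun c => σ c.1 c.2) ?_
      · rw [assembleAt_eq_splitTensor]
        exact posSemidef_splitTensor c.2 (hσ c.1 c.2).1 (hτ c.1 c.2).1
      · rintro ⟨j, l⟩ hc
        obtain rfl : l = m := (Finset.mem_filter.mp hc).2
        exact ⟨hσ j l, τ j l, hτ j l, assembleAt_eq_splitTensor _ _ _⟩
    have hbound := povmCN_le_of_sum_mutualInfo_le (by norm_num) _ hsite
    rwa [Finset.sum_fiberwise, hp1, mul_one, Nat.cast_ofNat] at hbound

/-- Generalization to mutually unbiased measurements: given `N` POVMs on `ℂ^d` obeying an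
entropic uncertainty bound `F`, every fully separable state satisfies
`C_N ≤ log₂ d − F/N` and every biseparable tripartite state satisfies
`C_N ≤ log₂ d − F/(3N)`. -/
theorem povm_correlation_bounds (d N : ℕ) (hd : 2 ≤ d)
    (P : Fin N → Fin d → Matrix (Fin d) (Fin d) ℂ)
    (hP : ∀ k, (∀ i, (P k i).PosSemidef) ∧ (∑ i, P k i) = 1)
    (F : ℝ)
    (hF : ∀ σ : Matrix (Fin d) (Fin d) ℂ, IsDensityOp σ →
      F ≤ ∑ k, shannon (fun i => (Matrix.trace (P k i * σ)).re)) :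
    (∀ n : ℕ, 0 < n → ∀ ρ : Matrix (Idx n d) (Idx n d) ℂ, IsDensityOp ρ → FullySep ρ →
      povmCN N ρ P ≤ Real.logb 2 d - F / N) ∧
    (∀ ρ : Matrix (Idx 3 d) (Idx 3 d) ℂ, IsDensityOp ρ → Bisep3 ρ →
      povmCN N ρ P ≤ Real.logb 2 d - F / (3 * N)) :=
  povm_correlation_bounds_general d N P hP F hF

end
end Paper
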